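/- Let Γ be an infinite group with trivial center, H a nontrivial abelian group, and 𝓖 = H^(Γ) ⋊ (Γ × Γ) the left–right wreath product. Then 𝓖 is an icc group: every nontrivial conjugacy class of 𝓖 is infinite. -/

import Mathlib

noncomputable section

/-- The left-right translation bijection `k ↦ g k h⁻¹` of `Γ` associated to `(g,h) ∈ Γ × Γ`. -/
def lrEquiv {Γ : Type*} [Group Γ] (p : Γ × Γ) : Γ ≃ Γ :=
  (Equiv.mulRight p.2⁻¹).trans (Equiv.mulLeft p.1)

/-- The left-right action of `Γ × Γ` on the base `H^(Γ)` of the wreath product,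
`((g,h)·x)_k = x_{g⁻¹ k h}`. -/
def lrAddAut (Γ H : Type*) [Group Γ] [AddCommGroup H] : (Γ × Γ) →* Multiplicative (AddAut (Γ →₀ H)) where
  toFun p := Multiplicative.ofAdd (Finsupp.domCongr (lrEquiv p) : (Γ →₀ H) ≃+ (Γ →₀ H))
  map_one' := by
    show Multiplicative.ofAdd _ = Multiplicative.ofAdd (0 : AddAut (Γ →₀ H))
    refine congrArg Multiplicative.ofAdd ?_
    ext x k
    show x ((lrEquiv 1).symm k) = x k
    congr 1
    simp [lrEquiv]
    rfl
  map_mul' p q := by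
    show Multiplicative.ofAdd _ = Multiplicative.ofAdd (_ + _ : AddAut (Γ →₀ H))
    refine congrArg Multiplicative.ofAdd ?_
    ext x k
    show x ((lrEquiv (p * q)).symm k) = x ((lrEquiv q).symm ((lrEquiv p).symm k))
    congr 1
    simp only [lrEquiv, Prod.fst_mul, Prod.snd_mul, Equiv.symm_trans_apply,
      Equiv.mulLeft_symm, Equiv.mulRight_symm, Equiv.coe_mulLeft, Equiv.coe_mulRight, inv_inv]
    group

/-- The same action, as an action on the multiplicative version of `H^(Γ)`. -/
def lrMulAut (Γ H : Type*) [Group Γ] [AddCommGroup H] :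
    (Γ × Γ) →* MulAut (Multiplicative (Γ →₀ H)) where
  toFun p := AddEquiv.toMultiplicative (Multiplicative.toAdd (lrAddAut Γ H p))
  map_one' := by
    have h : lrAddAut Γ H 1 = 1 := map_one _
    ext x : 1
    show AddEquiv.toMultiplicative (Multiplicative.toAdd (lrAddAut Γ H 1)) x = x
    rw [h]
    rfl
  map_mul' p q := by
    have h : lrAddAut Γ H (p * q) = lrAddAut Γ H p * lrAddAut Γ H q := map_mul _ _ _
    ext x : 1
    show AddEquiv.toMultiplicative (Multiplicative.toAdd (lrAddAut Γ H (p * q))) x =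
      (AddEquiv.toMultiplicative (Multiplicative.toAdd (lrAddAut Γ H p)) *
        AddEquiv.toMultiplicative (Multiplicative.toAdd (lrAddAut Γ H q))) x
    rw [h]
    rfl

/-- The left-right wreath product `H^(Γ) ⋊ (Γ × Γ)`. -/
abbrev LRWreath (Γ H : Type*) [Group Γ] [AddCommGroup H] :=
  SemidirectProduct (Multiplicative (Γ →₀ H)) (Γ × Γ) (lrMulAut Γ H)

/-- The homomorphism `p : H^(Γ) → H` summing all coordinates. -/
def coordSum (Γ H : Type*) [Group Γ] [AddCommGroup H] : (Γ →₀ H) →+ H :=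
  Finsupp.liftAddHom fun _ : Γ => AddMonoidHom.id H

end

/-!
Write `x = (v, p)` with `v ∈ H^(Γ)` and `p ∈ Γ × Γ`. If `p ≠ 1`, conjugating `x` by the base
elements `t δ_k` produces base parts `v + t δ_k - t δ_{p k}`, and for `k` moved by `p` such a
conjugate remembers `k` up to its finite support. There are infinitely many such `k`: if
`p = (g, h)` with `g ≠ 1`, pick `u` not commuting with `g`; the fixed points `k` of `p` (those
with `g k = k h`) are disjoint from their left translates by `u`, so they cannot be cofinite;
if `g = 1`, every point is moved.
If `p = 1` then `v ≠ 0`, and conjugating by `(g, 1)` translates `v` on the left; for a fixed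
`s ∈ supp v`, the translate `g v` remembers `g` up to the finitely many points of
`supp (g v) s⁻¹`.
-/
open SemidirectProduct

lemma Set.Infinite.image_of_forall_mem_finite {α β : Type*} {s : Set α} (hs : s.Infinite)
    (f : α → β) (F : β → Set α) (hF : ∀ b, (F b).Finite) (hmem : ∀ a ∈ s, a ∈ F (f a)) :
    (f '' s).Infinite := fun himage =>
  hs <| himage.of_finite_fibers f fun b _ =>
    (hF b).subset fun a ⟨ha, hab⟩ => (congrArg F hab : F (f a) = F b) ▸ hmem a ha

lemma Finsupp.apply_mem_support_equivMapDomain {α β M : Type*} [Zero M] (e : α ≃ β)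
    {v : α →₀ M} {s : α} (hs : s ∈ v.support) : e s ∈ (v.equivMapDomain e).support := by
  rwa [Finsupp.mem_support_iff, Finsupp.equivMapDomain_apply, e.symm_apply_apply,
    ← Finsupp.mem_support_iff]

section

variable {Γ : Type*} [Group Γ]

lemma infinite_setOf_mul_ne_mul [Infinite Γ] {g : Γ} (hg : g ∉ Subgroup.center Γ) (h : Γ) :
    {k : Γ | g * k ≠ k * h}.Infinite := by
  intro hM
  obtain ⟨u, hu⟩ : ∃ u, u * g ≠ g * u := by simpa [Subgroup.mem_center_iff] using hg
  have hfix : {k | g * k = k * h} ⊆ (u * ·) ⁻¹' {k | g * k ≠ k * h} := by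
    intro k (hk : g * k = k * h) (huk : g * (u * k) = u * k * h)
    refine hu (mul_right_cancel (b := k) ?_).symm
    rw [mul_assoc, huk, mul_assoc, mul_assoc, ← hk]
  have hfix_finite := (hM.preimage (mul_right_injective u).injOn).subset hfix
  exact Set.infinite_univ ((hfix_finite.union hM).subset fun k _ => em (g * k = k * h))

lemma lrEquiv_apply (p : Γ × Γ) (k : Γ) : lrEquiv p k = p.1 * (k * p.2⁻¹) := rfl

lemma infinite_setOf_lrEquiv_ne [Infinite Γ] (hZ : Subgroup.center Γ = ⊥) {p : Γ × Γ}
    (hp : p ≠ 1) :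
    {k : Γ | lrEquiv p k ≠ k}.Infinite := by
  obtain ⟨g, h⟩ := p
  simp only [lrEquiv_apply, ← mul_assoc, ne_eq, mul_inv_eq_iff_eq_mul]
  by_cases hg : g = 1
  · have hh : h ≠ 1 := by rintro rfl; exact hp (by rw [hg]; rfl)
    simpa [hg, hh] using Set.infinite_univ (α := Γ)
  · exact infinite_setOf_mul_ne_mul (by rwa [hZ, Subgroup.mem_bot]) h

end

namespace LRWreath

variable {Γ H : Type*} [Group Γ] [AddCommGroup H]

lemma toAdd_lrMulAut_apply (p : Γ × Γ) (v : Multiplicative (Γ →₀ H)) :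
    Multiplicative.toAdd (lrMulAut Γ H p v) =
      (Multiplicative.toAdd v).equivMapDomain (lrEquiv p) :=
  rfl

lemma infinite_setOf_isConj_inl [Infinite Γ] {v : Γ →₀ H} (hv : v ≠ 0) :
    {y : LRWreath Γ H | IsConj (inl (Multiplicative.ofAdd v)) y}.Infinite := by
  obtain ⟨s, hs⟩ := Finsupp.support_nonempty_iff.2 hv
  let f : Γ → LRWreath Γ H := fun g => inl (lrMulAut Γ H (g, 1) (Multiplicative.ofAdd v))
  have hrecover : ∀ g ∈ Set.univ,
      g ∈ (· * s⁻¹) '' ((Multiplicative.toAdd (f g).left).support : Set Γ) :=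
    fun g _ => ⟨lrEquiv (g, 1) s, Finsupp.apply_mem_support_equivMapDomain _ hs,
      by simp [lrEquiv_apply]⟩
  refine (Set.infinite_univ.image_of_forall_mem_finite f
    (fun y => (· * s⁻¹) '' ((Multiplicative.toAdd y.left).support : Set Γ))
    (fun y => (Finset.finite_toSet _).image _) hrecover).mono ?_
  rintro _ ⟨g, -, rfl⟩
  exact isConj_iff.2 ⟨inr (g, 1), by rw [← map_inv, ← inl_aut]⟩

lemma toAdd_left_inl_mul_mul_inv_inl (a : Γ →₀ H) (x : LRWreath Γ H) :
    Multiplicative.toAdd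
        (inl (Multiplicative.ofAdd a) * x * (inl (Multiplicative.ofAdd a))⁻¹).left =
      a + Multiplicative.toAdd x.left - a.equivMapDomain (lrEquiv x.right) := by
  simp only [mul_left, inv_left, left_inl, right_inl, mul_right, one_mul, inv_one, map_one,
    MulAut.one_apply, toAdd_mul, map_inv, toAdd_inv, toAdd_lrMulAut_apply, toAdd_ofAdd,
    sub_eq_add_neg]

lemma infinite_setOf_isConj_of_right_ne_one [Infinite Γ] [Nontrivial H]
    (hZ : Subgroup.center Γ = ⊥) {x : LRWreath Γ H} (hx : x.right ≠ 1) :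
    {y : LRWreath Γ H | IsConj x y}.Infinite := by
  obtain ⟨t, ht⟩ := exists_ne (0 : H)
  let f : Γ → LRWreath Γ H := fun k => inl (Multiplicative.ofAdd (Finsupp.single k t)) * x *
    (inl (Multiplicative.ofAdd (Finsupp.single k t)))⁻¹
  have hleft : ∀ k, Multiplicative.toAdd (f k).left - Multiplicative.toAdd x.left =
      Finsupp.single k t - Finsupp.single (lrEquiv x.right k) t := by
    intro k
    rw [toAdd_left_inl_mul_mul_inv_inl, Finsupp.equivMapDomain_single]
    abel
  have hrecover : ∀ k ∈ {k | lrEquiv x.right k ≠ k},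
      k ∈ ((Multiplicative.toAdd (f k).left - Multiplicative.toAdd x.left).support : Set Γ) := by
    intro k (hk : lrEquiv x.right k ≠ k)
    simp [hleft, hk.symm, ht]
  refine ((infinite_setOf_lrEquiv_ne hZ hx).image_of_forall_mem_finite f
    (fun y => ((Multiplicative.toAdd y.left - Multiplicative.toAdd x.left).support : Set Γ))
    (fun y => Finset.finite_toSet _) hrecover).mono ?_
  rintro _ ⟨k, -, rfl⟩
  exact isConj_iff.2 ⟨_, rfl⟩

end LRWreath

/-- if `Γ` is an infinite group with trivial center and `H` a nontrivial
abelian group, then the left-right wreath product `𝓖 = H^(Γ) ⋊ (Γ × Γ)` is icc: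
every nontrivial conjugacy class is infinite. -/
theorem stmt_2 {Γ H : Type*} [Group Γ] [Infinite Γ] [AddCommGroup H] [Nontrivial H]
    (hZ : Subgroup.center Γ = ⊥)
    (x : LRWreath Γ H) (hx : x ≠ 1) :
    {y : LRWreath Γ H | IsConj x y}.Infinite := by
  by_cases hright : x.right = 1
  · have hleft : Multiplicative.toAdd x.left ≠ 0 := fun h =>
      hx (SemidirectProduct.ext h hright)
    have hx_inl : x = inl x.left := SemidirectProduct.ext rfl hright
    rw [hx_inl]
    exact LRWreath.infinite_setOf_isConj_inl hleft
  · exact LRWreath.infinite_setOf_isConj_of_right_ne_one hZ hright
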